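/- arXiv:1707.05126 — 3 statements merged into one kernel-verified Lean document; each statement's English description precedes it below -/
import Mathlib

section
/- Let λ ≥ 1, μ > 0.462, α, β ∈ [0,1), γ ∈ [0,1]. If [(1-αβ)γ + (1-αβ + (2-(1+β)α)γ)μ] μ^{-2} e^{1/μ} ≤ 1-α, then Σ_{n≥2} (1+(n-1)γ)(n-α-(n-1)αβ) · [Γ(μ)/Γ(λ(n-1)+μ)] · e^{-1/μ}/(n-1)! ≤ 1-α, and hence the function F_{λ,μ}(z) = z + Σ_{n≥2} [Γ(μ)/Γ(λ(n-1)+μ)] e^{-1/μ}/(n-1)! · z^n belongs to S*C(α,β;γ). -/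
open Complex

noncomputable def Ffun (lam μ : ℝ) : ℂ → ℂ := fun z =>
  z + ∑' n : ℕ,
    ((Real.Gamma μ / Real.Gamma (lam * ((n : ℝ) + 1) + μ) * Real.exp (-1 / μ) /
      (Nat.factorial (n + 1) : ℝ) : ℝ) : ℂ) * z ^ (n + 2)

/-!
The coefficient of `z ^ (n + 2)` in `Ffun λ μ` is `Γ(μ) / Γ(λ(n+1) + μ) · e^{-1/μ} / (n+1)!`.
Since `Γ(μ) μ^k ≤ Γ(μ + k)` and `Γ` is increasing on `[1.462, ∞)` (its minimum is at
`1.4616…`), this is at most `e^{-1/μ} μ^{-(n+1)} / (n+1)!`. The weighted coefficient sum is then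
dominated by an exponential series with sum `(1 - α)(1 - e^{-1/μ}) + Q`, where `Q e^{1/μ}` is
the left-hand side of the hypothesis, so `Q ≤ (1 - α) e^{-1/μ}`.

For the class membership write `N` and `D` for the numerator and denominator of the defining
quotient of a normalized series `z + ∑ aₙ z^(n+2)`. Then `N - D` and `D - z` are power series
whose coefficients are fixed nonnegative multiples of the `aₙ`, and the coefficient condition
gives `|N - D| < (1 - α) |D|`, hence `Re (N / D) > α`.
-/

open Finset

theorem two_mul_add_le_log_sub_log {t : ℝ} (ht0 : 0 ≤ t) (ht1 : t < 1) :
    2 * t + 2 * t ^ 3 / 3 ≤ Real.log (1 + t) - Real.log (1 - t) := by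
  have hs := Real.hasSum_log_sub_log_of_abs_lt_one (by rwa [abs_of_nonneg ht0])
  have := sum_le_hasSum (range 2) (fun k _ => by positivity) hs
  norm_num [sum_range_succ] at this
  linarith

/-- A telescoping majorant of `1 / x`. The harmonic sums below beat `log n` by only `~10⁻⁴`
(`1.462` is barely above the minimum point of `Γ`), so besides `log` it keeps part of the cubic
term of `log ((x + 1/2) / (x - 1/2)) = 1/x + 1/(12 x³) + …`. -/
noncomputable def harmonicMajorant (x : ℝ) : ℝ :=
  Real.log (x - 1 / 2) + 1 / (25 * (x - 1 / 2) ^ 2)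

theorem one_div_le_harmonicMajorant_add_one_sub {x : ℝ} (hx : 4 ≤ x) :
    1 / x ≤ harmonicMajorant (x + 1) - harmonicMajorant x := by
  have hx0 : 0 < x := by linarith
  have ht1 : 1 / (2 * x) < 1 := by rw [div_lt_one] <;> linarith
  have hlog : Real.log (x + 1 / 2) - Real.log (x - 1 / 2) =
      Real.log (1 + 1 / (2 * x)) - Real.log (1 - 1 / (2 * x)) := by
    rw [← Real.log_div (by linarith) (by linarith), ← Real.log_div (by positivity) (by linarith)]
    congr 1
    field_simp
  have hcubic := two_mul_add_le_log_sub_log (by positivity) ht1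
  have hcorr : 1 / (25 * (x - 1 / 2) ^ 2) - 1 / (25 * (x + 1 / 2) ^ 2) ≤ 1 / (12 * x ^ 3) := by
    have hx2 : 0 < x - 1 / 2 := by linarith
    have hd : 0 < x ^ 2 - 1 / 4 := by nlinarith
    have hdiff : 1 / (25 * (x - 1 / 2) ^ 2) - 1 / (25 * (x + 1 / 2) ^ 2) =
        2 * x / (25 * (x ^ 2 - 1 / 4) ^ 2) := by
      rw [div_sub_div _ _ (by positivity) (by positivity),
        div_eq_div_iff (by positivity) (by positivity)]
      ring
    rw [hdiff, div_le_div_iff₀ (by positivity) (by positivity)]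
    nlinarith [mul_pos (pow_pos hx0 3) (by nlinarith : (0 : ℝ) < x ^ 2 - 13)]
  have h2t : 2 * (1 / (2 * x)) = 1 / x := by field_simp
  have h2t3 : 2 * (1 / (2 * x)) ^ 3 / 3 = 1 / (12 * x ^ 3) := by field_simp; ring
  simp only [harmonicMajorant, show x + 1 - 1 / 2 = x + 1 / 2 by ring]
  linarith

theorem sum_range_one_div_le_harmonicMajorant {B : ℝ} (hB : 4 ≤ B) (M : ℕ) :
    ∑ k ∈ range M, 1 / (B + k) ≤ harmonicMajorant (B + M) - harmonicMajorant B := by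
  induction M with
  | zero => simp
  | succ M ih =>
    rw [sum_range_succ, Nat.cast_succ, ← add_assoc]
    have := one_div_le_harmonicMajorant_add_one_sub (x := B + M)
      (by linarith [M.cast_nonneg (α := ℝ)])
    linarith

theorem le_log_5481_div_500 : 2.3942 ≤ Real.log (5481 / 500) := by
  have h := two_mul_add_le_log_sub_log (t := 1481 / 9481) (by norm_num) (by norm_num)
  rw [← Real.log_div (by norm_num) (by norm_num)] at h
  have hsplit : Real.log (5481 / 500) = 3 * Real.log 2 + Real.log (5481 / 4000) := by
    rw [show (5481 : ℝ) / 500 = 2 ^ 3 * (5481 / 4000) by norm_num,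
      Real.log_mul (by norm_num) (by norm_num), Real.log_pow]
    push_cast
    ring
  norm_num at h
  linarith [Real.log_two_gt_d9]

theorem sum_range_one_div_le_log {a : ℝ} (ha : 1.462 ≤ a) {n : ℕ} (hn : 1000000 ≤ n) :
    ∑ k ∈ range (n + 1), 1 / (a + k) ≤ Real.log n := by
  have hn' : (1000000 : ℝ) ≤ n := by exact_mod_cast hn
  have hhead : ∑ k ∈ range 10, 1 / (1.462 + (k : ℝ)) ≤ 2.3944251 := by
    norm_num [sum_range_succ]
  have htail := sum_range_one_div_le_harmonicMajorant (B := 11.462) (by norm_num) (n - 9)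
  have hlog : Real.log (n + 1.962) ≤ Real.log n + 1.962 / n := by
    have := Real.log_le_sub_one_of_pos (x := (n + 1.962) / n) (by positivity)
    rw [Real.log_div (by positivity) (by positivity)] at this
    have e : ((n : ℝ) + 1.962) / n - 1 = 1.962 / n := by field_simp; ring
    linarith
  have hsmall : 1.962 / (n : ℝ) ≤ 0.000002 := by
    rw [div_le_iff₀ (by positivity)]; linarith
  have hsq : 1 / (25 * ((n : ℝ) + 1.962) ^ 2) ≤ 0.000001 := by
    rw [div_le_iff₀ (by positivity)]; nlinarith
  have hend : harmonicMajorant (11.462 + ((n - 9 : ℕ) : ℝ)) ≤ Real.log n + 0.000003 := by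
    rw [Nat.cast_sub (by omega), harmonicMajorant,
      show (11.462 : ℝ) + (n - (9 : ℕ)) - 1 / 2 = n + 1.962 by push_cast; ring]
    linarith
  have hstart : 2.394532 ≤ harmonicMajorant 11.462 := by
    have := le_log_5481_div_500
    norm_num [harmonicMajorant]
    linarith
  calc ∑ k ∈ range (n + 1), 1 / (a + k)
      ≤ ∑ k ∈ range (n + 1), 1 / (1.462 + (k : ℝ)) :=
        sum_le_sum fun k _ => one_div_le_one_div_of_le (by positivity) (by linarith)
    _ = ∑ k ∈ range 10, 1 / (1.462 + (k : ℝ)) +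
          ∑ k ∈ range (n - 9), 1 / (11.462 + (k : ℝ)) := by
        rw [show n + 1 = 10 + (n - 9) by omega, sum_range_add]
        push_cast
        ring_nf
    _ ≤ Real.log n := by linarith

namespace Real

theorem GammaSeq_le_GammaSeq {a b : ℝ} (ha : 1.462 ≤ a) (hab : a ≤ b) {n : ℕ}
    (hn : 1000000 ≤ n) : GammaSeq a n ≤ GammaSeq b n := by
  have hnpos : (0 : ℝ) < n := by exact_mod_cast (show 0 < n by omega)
  have ha0 : 0 < a := by linarith
  have hb0 : 0 < b := by linarith
  have hPa : 0 < ∏ j ∈ range (n + 1), (a + j) := prod_pos fun j _ => by positivity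
  -- `b + j ≤ (a + j) exp ((b - a) / (a + j))`, and the harmonic sum in the exponent is `≤ log n`
  have hprod : ∏ j ∈ range (n + 1), (b + j) ≤
      (n : ℝ) ^ (b - a) * ∏ j ∈ range (n + 1), (a + j) :=
    calc ∏ j ∈ range (n + 1), (b + j)
        ≤ ∏ j ∈ range (n + 1), ((a + j) * Real.exp ((b - a) * (1 / (a + j)))) := by
          refine prod_le_prod (fun j _ => by positivity) fun j _ => ?_
          have hpos : (0 : ℝ) < a + j := by positivity
          have := Real.add_one_le_exp ((b - a) * (1 / (a + j)))
          calc b + j = (a + j) * ((b - a) * (1 / (a + j)) + 1) := by field_simp; ring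
            _ ≤ _ := by gcongr
      _ = Real.exp ((b - a) * ∑ j ∈ range (n + 1), 1 / (a + j)) *
            ∏ j ∈ range (n + 1), (a + j) := by
          rw [prod_mul_distrib, mul_sum, Real.exp_sum, mul_comm]
      _ ≤ Real.exp ((b - a) * Real.log n) * ∏ j ∈ range (n + 1), (a + j) := by
          gcongr
          exact sum_range_one_div_le_log ha hn
      _ = (n : ℝ) ^ (b - a) * ∏ j ∈ range (n + 1), (a + j) := by
          rw [Real.rpow_def_of_pos hnpos, mul_comm (b - a)]
  unfold GammaSeq
  rw [div_le_div_iff₀ hPa (prod_pos fun j _ => by positivity)]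
  calc (n : ℝ) ^ a * (n.factorial : ℝ) * ∏ j ∈ range (n + 1), (b + j)
      ≤ (n : ℝ) ^ a * (n.factorial : ℝ) *
          ((n : ℝ) ^ (b - a) * ∏ j ∈ range (n + 1), (a + j)) := by gcongr
    _ = (n : ℝ) ^ b * (n.factorial : ℝ) * ∏ j ∈ range (n + 1), (a + j) := by
        rw [show b = a + (b - a) by ring, Real.rpow_add hnpos]
        ring_nf

theorem Gamma_monotoneOn_Ici : MonotoneOn Gamma (Set.Ici 1.462) := fun a ha b _ hab =>
  le_of_tendsto_of_tendsto (GammaSeq_tendsto_Gamma a) (GammaSeq_tendsto_Gamma b) <|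
    Filter.eventually_atTop.2 ⟨1000000, fun _ hn => GammaSeq_le_GammaSeq ha hab hn⟩

theorem Gamma_mul_pow_le_Gamma_add {μ : ℝ} (hμ : 0 < μ) (k : ℕ) :
    Gamma μ * μ ^ k ≤ Gamma (μ + k) := by
  induction k with
  | zero => simp
  | succ k ih =>
    have hμk : 0 < μ + k := by positivity
    rw [Nat.cast_succ, ← add_assoc, Gamma_add_one hμk.ne', pow_succ']
    calc Gamma μ * (μ * μ ^ k) = μ * (Gamma μ * μ ^ k) := by ring
      _ ≤ (μ + k) * Gamma (μ + k) := by
        have := Gamma_pos_of_pos hμk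
        gcongr
        linarith [k.cast_nonneg (α := ℝ)]

end Real

noncomputable def Fcoeff (lam μ : ℝ) (n : ℕ) : ℝ :=
  Real.Gamma μ / Real.Gamma (lam * ((n : ℝ) + 1) + μ) * Real.exp (-1 / μ) /
    (Nat.factorial (n + 1) : ℝ)

section Fcoeff

variable {lam μ : ℝ}

theorem Gamma_div_Gamma_le_inv_pow (hlam : 1 ≤ lam) (hμ : 0.462 < μ) (n : ℕ) :
    Real.Gamma μ / Real.Gamma (lam * ((n : ℝ) + 1) + μ) ≤ μ⁻¹ ^ (n + 1) := by
  have hμ0 : 0 < μ := by linarith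
  have hn : (0 : ℝ) ≤ n := n.cast_nonneg
  have hle : Real.Gamma μ * μ ^ (n + 1) ≤ Real.Gamma (lam * ((n : ℝ) + 1) + μ) := by
    refine (Real.Gamma_mul_pow_le_Gamma_add hμ0 (n + 1)).trans
      (Real.Gamma_monotoneOn_Ici ?_ ?_ ?_)
    · push_cast; show (1.462 : ℝ) ≤ _; linarith
    · show (1.462 : ℝ) ≤ _; nlinarith
    · push_cast; nlinarith
  have hpos : 0 < Real.Gamma μ * μ ^ (n + 1) := by
    have := Real.Gamma_pos_of_pos hμ0; positivity
  rw [div_le_iff₀ (hpos.trans_le hle), inv_pow]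
  calc Real.Gamma μ = (μ ^ (n + 1))⁻¹ * (Real.Gamma μ * μ ^ (n + 1)) := by field_simp
    _ ≤ _ := by gcongr

theorem Fcoeff_nonneg (hlam : 1 ≤ lam) (hμ : 0.462 < μ) (n : ℕ) : 0 ≤ Fcoeff lam μ n := by
  have hμ0 : 0 < μ := by linarith
  have := Real.Gamma_pos_of_pos (s := lam * ((n : ℝ) + 1) + μ) (by positivity)
  have := Real.Gamma_pos_of_pos hμ0
  unfold Fcoeff
  positivity

theorem Fcoeff_le (hlam : 1 ≤ lam) (hμ : 0.462 < μ) (n : ℕ) :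
    Fcoeff lam μ n ≤ Real.exp (-μ⁻¹) * (μ⁻¹ ^ (n + 1) / (Nat.factorial (n + 1) : ℝ)) := by
  rw [Fcoeff, neg_div, one_div, mul_div_assoc', mul_comm (Real.exp _)]
  gcongr
  exact Gamma_div_Gamma_le_inv_pow hlam hμ n

end Fcoeff

section ExpSeries

variable (x : ℝ)

theorem hasSum_pow_div_factorial_exp :
    HasSum (fun n : ℕ => x ^ n / (Nat.factorial n : ℝ)) (Real.exp x) := by
  rw [Real.exp_eq_exp_ℝ]
  exact NormedSpace.expSeries_div_hasSum_exp x

theorem hasSum_pow_succ_div_factorial_succ :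
    HasSum (fun n : ℕ => x ^ (n + 1) / (Nat.factorial (n + 1) : ℝ)) (Real.exp x - 1) := by
  simpa using (hasSum_nat_add_iff' 1).2 (hasSum_pow_div_factorial_exp x)

theorem hasSum_succ_mul_pow_succ_div_factorial_succ :
    HasSum (fun n : ℕ => ((n : ℝ) + 1) * (x ^ (n + 1) / (Nat.factorial (n + 1) : ℝ)))
      (x * Real.exp x) := by
  refine ((hasSum_pow_div_factorial_exp x).mul_left x).congr_fun fun n => ?_
  rw [Nat.factorial_succ, Nat.cast_mul, pow_succ]
  push_cast
  field_simp

theorem hasSum_succ_sq_mul_pow_succ_div_factorial_succ :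
    HasSum (fun n : ℕ => ((n : ℝ) + 1) ^ 2 * (x ^ (n + 1) / (Nat.factorial (n + 1) : ℝ)))
      ((x + x ^ 2) * Real.exp x) := by
  have hmul : HasSum (fun n : ℕ => (n : ℝ) * (x ^ n / (Nat.factorial n : ℝ)))
      (x * Real.exp x) := by
    refine (hasSum_nat_add_iff' 1).1 ?_
    simpa using hasSum_succ_mul_pow_succ_div_factorial_succ x
  rw [show (x + x ^ 2) * Real.exp x = x * (x * Real.exp x + Real.exp x) by ring]
  refine ((hmul.add (hasSum_pow_div_factorial_exp x)).mul_left x).congr_fun fun n => ?_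
  rw [Nat.factorial_succ, Nat.cast_mul, pow_succ]
  push_cast
  field_simp
  ring

end ExpSeries

theorem summable_sq_mul_Fcoeff {lam μ : ℝ} (hlam : 1 ≤ lam) (hμ : 0.462 < μ) :
    Summable fun n : ℕ => ((n : ℝ) + 2) ^ 2 * Fcoeff lam μ n := by
  refine (((hasSum_succ_sq_mul_pow_succ_div_factorial_succ μ⁻¹).mul_left
    (4 * Real.exp (-μ⁻¹))).summable).of_nonneg_of_le
    (fun n => mul_nonneg (by positivity) (Fcoeff_nonneg hlam hμ n)) fun n => ?_
  have hn : (0 : ℝ) ≤ n := n.cast_nonneg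
  calc ((n : ℝ) + 2) ^ 2 * Fcoeff lam μ n
      ≤ (4 * ((n : ℝ) + 1) ^ 2) *
          (Real.exp (-μ⁻¹) * (μ⁻¹ ^ (n + 1) / (Nat.factorial (n + 1) : ℝ))) :=
        mul_le_mul (by nlinarith) (Fcoeff_le hlam hμ n) (Fcoeff_nonneg hlam hμ n) (by positivity)
    _ = _ := by ring

/-- The weight of `|a_{n+2}|` in the coefficient condition for `S*C(α,β;γ)`: the paper's
`(1 + (k-1)γ)(k - α - (k-1)αβ)` at `k = n + 2`. -/
def starWeight (α β γ : ℝ) (n : ℕ) : ℝ :=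
  (1 + ((n : ℝ) + 1) * γ) * (((n : ℝ) + 2) - α - ((n : ℝ) + 1) * α * β)

section StarWeight

variable {α β γ : ℝ}

theorem starWeight_nonneg (hα : α < 1) (hβ0 : 0 ≤ β) (hβ1 : β ≤ 1) (hγ : 0 ≤ γ) (n : ℕ) :
    0 ≤ starWeight α β γ n := by
  have hn : (0 : ℝ) ≤ n := n.cast_nonneg
  have hαβ : α * β ≤ 1 := by
    rcases le_total 0 α with h | h <;> nlinarith
  unfold starWeight
  refine mul_nonneg (by positivity) ?_
  nlinarith

theorem hasSum_starWeight_mul_pow_succ_div_factorial_succ (x : ℝ) :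
    HasSum (fun n : ℕ => starWeight α β γ n * (x ^ (n + 1) / (Nat.factorial (n + 1) : ℝ)))
      ((1 - α) * (Real.exp x - 1) + ((1 - α * β) + γ * (1 - α)) * (x * Real.exp x) +
        γ * (1 - α * β) * ((x + x ^ 2) * Real.exp x)) := by
  refine ((((hasSum_pow_succ_div_factorial_succ x).mul_left (1 - α)).add
    ((hasSum_succ_mul_pow_succ_div_factorial_succ x).mul_left _)).add
    ((hasSum_succ_sq_mul_pow_succ_div_factorial_succ x).mul_left _)).congr_fun fun n => ?_
  unfold starWeight
  ring

theorem summable_starWeight_mul_Fcoeff_and_tsum_le {lam μ : ℝ} (hlam : 1 ≤ lam)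
    (hμ : 0.462 < μ) (hα : α < 1) (hβ0 : 0 ≤ β) (hβ1 : β ≤ 1) (hγ : 0 ≤ γ)
    (hcond : ((1 - α * β) * γ + (1 - α * β + (2 - (1 + β) * α) * γ) * μ) / μ ^ 2 *
      Real.exp (1 / μ) ≤ 1 - α) :
    Summable (fun n => starWeight α β γ n * Fcoeff lam μ n) ∧
      ∑' n, starWeight α β γ n * Fcoeff lam μ n ≤ 1 - α := by
  have hμ0 : 0 < μ := by linarith
  set x := μ⁻¹
  have hB := (hasSum_starWeight_mul_pow_succ_div_factorial_succ (α := α) (β := β) (γ := γ)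
    x).mul_left (Real.exp (-x))
  have hw := starWeight_nonneg hα hβ0 hβ1 hγ
  have hT0 n : 0 ≤ starWeight α β γ n * Fcoeff lam μ n :=
    mul_nonneg (hw n) (Fcoeff_nonneg hlam hμ n)
  have hTB n : starWeight α β γ n * Fcoeff lam μ n ≤
      Real.exp (-x) * (starWeight α β γ n * (x ^ (n + 1) / (Nat.factorial (n + 1) : ℝ))) := by
    rw [mul_left_comm]
    exact mul_le_mul_of_nonneg_left (Fcoeff_le hlam hμ n) (hw n)
  have hT := Summable.of_nonneg_of_le hT0 hTB hB.summable
  refine ⟨hT, (hasSum_le hTB hT.hasSum hB).trans ?_⟩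
  set Q := ((1 - α * β) + γ * (1 - α)) * x + γ * (1 - α * β) * (x + x ^ 2)
  have hQ : Q * Real.exp x ≤ 1 - α := by
    convert hcond using 2
    · simp only [Q, x]; field_simp; ring
    · rw [one_div]
  have hexp : Real.exp (-x) * Real.exp x = 1 := by
    rw [← Real.exp_add, neg_add_cancel, Real.exp_zero]
  have hQ' : Q ≤ (1 - α) * Real.exp (-x) := by
    nlinarith [Real.exp_pos x, Real.exp_pos (-x)]
  calc Real.exp (-x) * ((1 - α) * (Real.exp x - 1) +
        ((1 - α * β) + γ * (1 - α)) * (x * Real.exp x) +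
        γ * (1 - α * β) * ((x + x ^ 2) * Real.exp x))
      = (1 - α) * (1 - Real.exp (-x)) + Q * (Real.exp (-x) * Real.exp x) := by
        simp only [Q]; linear_combination (1 - α) * hexp
    _ ≤ 1 - α := by rw [hexp]; linarith

end StarWeight

theorem lt_re_div_of_norm_sub_le {N D z : ℂ} {α s₁ s₂ : ℝ} (hz0 : z ≠ 0) (hz : ‖z‖ < 1)
    (hα : α < 1) (hs : s₁ + (1 - α) * s₂ ≤ 1 - α) (hND : ‖N - D‖ ≤ ‖z‖ ^ 2 * s₁)
    (hD : ‖D - z‖ ≤ ‖z‖ ^ 2 * s₂) : α < (N / D).re := by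
  have hρ : 0 < ‖z‖ := norm_pos_iff.2 hz0
  have hs₁ : 0 ≤ s₁ := nonneg_of_mul_nonneg_right ((norm_nonneg _).trans hND) (by positivity)
  have hs₂ : s₂ ≤ 1 := by nlinarith
  have hDlow : ‖z‖ * (1 - ‖z‖ * s₂) ≤ ‖D‖ := by
    have := norm_sub_norm_le z (z - D)
    rw [sub_sub_cancel, norm_sub_rev] at this
    nlinarith
  have hDpos : 0 < ‖z‖ * (1 - ‖z‖ * s₂) := by
    refine mul_pos hρ ?_
    rcases le_total s₂ 0 with h | h <;> nlinarith
  have hquot : ‖(N - D) / D‖ < 1 - α := by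
    rw [norm_div, div_lt_iff₀ (hDpos.trans_le hDlow)]
    calc ‖N - D‖ ≤ ‖z‖ ^ 2 * s₁ := hND
      _ ≤ ‖z‖ ^ 2 * ((1 - α) * (1 - s₂)) := by gcongr; linarith
      _ < (1 - α) * (‖z‖ * (1 - ‖z‖ * s₂)) := by nlinarith [mul_pos hρ (sub_pos.2 hα)]
      _ ≤ (1 - α) * ‖D‖ := by gcongr
  have hD0 : D ≠ 0 := norm_pos_iff.1 (hDpos.trans_le hDlow)
  have hsplit : N / D = 1 + (N - D) / D := by field_simp; ring
  rw [hsplit, Complex.add_re, Complex.one_re]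
  linarith [neg_abs_le ((N - D) / D).re, Complex.abs_re_le_norm ((N - D) / D)]

theorem norm_mul_mul_pow_le {x c z : ℂ} {C : ℝ} (hc : ‖c‖ ≤ C) (hz : ‖z‖ ≤ 1) (m : ℕ) :
    ‖x * (c * z ^ m)‖ ≤ C * ‖x‖ := by
  rw [norm_mul, norm_mul, norm_pow, mul_comm]
  have : ‖z‖ ^ m ≤ 1 := pow_le_one₀ (norm_nonneg z) hz
  have := (norm_nonneg c).trans hc
  calc ‖c‖ * ‖z‖ ^ m * ‖x‖ ≤ C * 1 * ‖x‖ := by gcongr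
    _ = C * ‖x‖ := by rw [mul_one]

theorem norm_le_sq_mul_tsum_of_hasSum {s : ℕ → ℝ} {a : ℕ → ℂ} {z S : ℂ} (hs : ∀ n, 0 ≤ s n)
    (hz : ‖z‖ ≤ 1) (hS : HasSum (fun n => (s n : ℂ) * (a n * z ^ (n + 2))) S)
    (hsum : Summable fun n => s n * ‖a n‖) : ‖S‖ ≤ ‖z‖ ^ 2 * ∑' n, s n * ‖a n‖ := by
  refine hS.norm_le_of_bounded (hsum.hasSum.mul_left _) fun n => ?_
  rw [norm_mul, norm_mul, Complex.norm_real, Real.norm_of_nonneg (hs n), norm_pow, pow_add]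
  have : ‖z‖ ^ n ≤ 1 := pow_le_one₀ (norm_nonneg z) hz
  have := mul_nonneg (hs n) (norm_nonneg (a n))
  calc s n * (‖a n‖ * (‖z‖ ^ n * ‖z‖ ^ 2)) = ‖z‖ ^ 2 * (s n * ‖a n‖) * ‖z‖ ^ n := by ring
    _ ≤ ‖z‖ ^ 2 * (s n * ‖a n‖) * 1 := by gcongr
    _ = _ := mul_one _

theorem summable_mul_norm_of_le_mul_sq {s : ℕ → ℝ} {a : ℕ → ℂ} {C : ℝ} (hs0 : ∀ n, 0 ≤ s n)
    (hs : ∀ n, s n ≤ C * ((n : ℝ) + 2) ^ 2)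
    (ha : Summable fun n : ℕ => ((n : ℝ) + 2) ^ 2 * ‖a n‖) : Summable fun n => s n * ‖a n‖ :=
  (ha.mul_left C).of_nonneg_of_le (fun n => mul_nonneg (hs0 n) (norm_nonneg _)) fun n => by
    rw [← mul_assoc]
    exact mul_le_mul_of_nonneg_right (hs n) (norm_nonneg _)

theorem hasDerivAt_tsum_mul_pow_succ {b : ℕ → ℂ} {k : ℕ}
    (hb : Summable fun n => ((n + k + 1 : ℕ) : ℝ) * ‖b n‖) {z : ℂ} (hz : ‖z‖ < 1) :
    HasDerivAt (fun w => ∑' n, b n * w ^ (n + k + 1))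
      (∑' n, b n * (((n + k + 1 : ℕ) : ℂ) * z ^ (n + k))) z := by
  refine hasDerivAt_tsum_of_isPreconnected (𝕜 := ℂ) (g := fun n w => b n * w ^ (n + k + 1))
    (g' := fun n w => b n * (((n + k + 1 : ℕ) : ℂ) * w ^ (n + k))) hb Metric.isOpen_ball
    (convex_ball (0 : ℂ) 1).isPreconnected (fun n y _ => ?_) (fun n y hy => ?_)
    (Metric.mem_ball_self one_pos) ?_ (mem_ball_zero_iff.2 hz)
  · simpa using (hasDerivAt_pow (n + k + 1) y).const_mul (b n)
  · exact norm_mul_mul_pow_le (Complex.norm_natCast _).le (mem_ball_zero_iff.1 hy).le _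
  · simp

noncomputable def normalizedSeries (a : ℕ → ℂ) (z : ℂ) : ℂ := z + ∑' n, a n * z ^ (n + 2)

section NormalizedSeries

variable {a : ℕ → ℂ} {z : ℂ}

theorem hasDerivAt_normalizedSeries
    (ha : Summable fun n : ℕ => ((n : ℝ) + 2) ^ 2 * ‖a n‖) (hz : ‖z‖ < 1) :
    HasDerivAt (normalizedSeries a) (1 + ∑' n, a n * (((n : ℂ) + 2) * z ^ (n + 1))) z := by
  have hb : Summable fun n => ((n + 1 + 1 : ℕ) : ℝ) * ‖a n‖ :=
    ha.of_nonneg_of_le (fun n => by positivity) fun n =>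
      mul_le_mul_of_nonneg_right (by push_cast; nlinarith) (norm_nonneg _)
  refine ((hasDerivAt_id z).add (hasDerivAt_tsum_mul_pow_succ (k := 1) hb hz)).congr_deriv ?_
  refine congrArg (1 + ·) (tsum_congr fun n => ?_)
  push_cast
  ring

theorem deriv_deriv_normalizedSeries
    (ha : Summable fun n : ℕ => ((n : ℝ) + 2) ^ 2 * ‖a n‖) (hz : ‖z‖ < 1) :
    deriv (deriv (normalizedSeries a)) z =
      ∑' n, a n * (((n : ℂ) + 2) * ((n : ℂ) + 1) * z ^ n) := by
  have hev : deriv (normalizedSeries a) =ᶠ[nhds z]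
      fun w => 1 + ∑' n, (a n * ((n + 1 + 1 : ℕ) : ℂ)) * w ^ (n + 0 + 1) := by
    filter_upwards [Metric.isOpen_ball.mem_nhds (mem_ball_zero_iff.2 hz)] with w hw
    rw [(hasDerivAt_normalizedSeries ha (mem_ball_zero_iff.1 hw)).deriv]
    refine congrArg (1 + ·) (tsum_congr fun n => ?_)
    push_cast
    ring
  have hb : Summable fun n => ((n + 0 + 1 : ℕ) : ℝ) * ‖a n * ((n + 1 + 1 : ℕ) : ℂ)‖ :=
    ha.of_nonneg_of_le (fun n => by positivity) fun n => by
      rw [norm_mul, Complex.norm_natCast]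
      push_cast
      nlinarith [mul_nonneg (by positivity : (0 : ℝ) ≤ n + 2) (norm_nonneg (a n))]
  have h2 : HasDerivAt (fun w => 1 + ∑' n, (a n * ((n + 1 + 1 : ℕ) : ℂ)) * w ^ (n + 0 + 1))
      (∑' n, (a n * ((n + 1 + 1 : ℕ) : ℂ)) * (((n + 0 + 1 : ℕ) : ℂ) * z ^ (n + 0))) z :=
    (hasDerivAt_tsum_mul_pow_succ (k := 0) (b := fun n => a n * ((n + 1 + 1 : ℕ) : ℂ)) hb
      hz).const_add 1
  rw [hev.deriv_eq, h2.deriv]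
  refine tsum_congr fun n => ?_
  push_cast
  ring

theorem hasSum_normalizedSeries_derivs
    (ha : Summable fun n : ℕ => ((n : ℝ) + 2) ^ 2 * ‖a n‖) (hz : ‖z‖ < 1) :
    HasSum (fun n => a n * z ^ (n + 2)) (normalizedSeries a z - z) ∧
      HasSum (fun n => a n * (((n : ℂ) + 2) * z ^ (n + 1))) (deriv (normalizedSeries a) z - 1) ∧
      HasSum (fun n => a n * (((n : ℂ) + 2) * ((n : ℂ) + 1) * z ^ n))
        (deriv (deriv (normalizedSeries a)) z) := by
  have hn0 (n : ℕ) : (0 : ℝ) ≤ n := n.cast_nonneg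
  have hcast (n : ℕ) : ‖(n : ℂ) + 2‖ = (n : ℝ) + 2 := by
    rw [show (n : ℂ) + 2 = ((n + 2 : ℕ) : ℂ) by push_cast; ring, Complex.norm_natCast]
    push_cast; ring
  refine ⟨?_, ?_, ?_⟩
  · rw [normalizedSeries, add_sub_cancel_left]
    refine (Summable.of_norm_bounded (f := fun n => a n * z ^ (n + 2)) ha fun n => ?_).hasSum
    simpa only [one_mul] using norm_mul_mul_pow_le (x := a n) (c := 1)
      (by rw [norm_one]; nlinarith [hn0 n]) hz.le (n + 2)
  · rw [(hasDerivAt_normalizedSeries ha hz).deriv, add_sub_cancel_left]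
    exact (Summable.of_norm_bounded ha fun n => norm_mul_mul_pow_le
      (by rw [hcast]; nlinarith [hn0 n]) hz.le (n + 1)).hasSum
  · rw [deriv_deriv_normalizedSeries ha hz]
    refine (Summable.of_norm_bounded ha fun n => norm_mul_mul_pow_le ?_ hz.le n).hasSum
    rw [norm_mul, hcast, show (n : ℂ) + 1 = ((n + 1 : ℕ) : ℂ) by push_cast; ring,
      Complex.norm_natCast]
    push_cast
    nlinarith [hn0 n]

end NormalizedSeries

/-- Numerator and denominator of the quotient whose real part defines `S*C(α,β;γ)`. -/
noncomputable def scNum (γ : ℝ) (f : ℂ → ℂ) (z : ℂ) : ℂ :=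
  z * deriv f z + (γ : ℂ) * z ^ 2 * deriv (deriv f) z

noncomputable def scDen (β γ : ℝ) (f : ℂ → ℂ) (z : ℂ) : ℂ :=
  (γ : ℂ) * z * (deriv f z + (β : ℂ) * z * deriv (deriv f) z) +
    (1 - (γ : ℂ)) * ((β : ℂ) * z * deriv f z + (1 - (β : ℂ)) * f z)

/-- For `f = normalizedSeries a`, the coefficient of `z ^ (n + 2)` in `scNum - scDen` is
`scDefectCoeff β γ n * a n`, and in `scDen - z` it is `scDenCoeff β γ n * a n`. -/
def scDefectCoeff (β γ : ℝ) (n : ℕ) : ℝ := (1 + ((n : ℝ) + 1) * γ) * (((n : ℝ) + 1) * (1 - β))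

def scDenCoeff (β γ : ℝ) (n : ℕ) : ℝ := (1 + β * ((n : ℝ) + 1)) * (1 + ((n : ℝ) + 1) * γ)

section Criterion

variable {α β γ : ℝ}

theorem starWeight_eq_scDefectCoeff_add (n : ℕ) :
    starWeight α β γ n = scDefectCoeff β γ n + (1 - α) * scDenCoeff β γ n := by
  unfold starWeight scDefectCoeff scDenCoeff
  ring

theorem scDefectCoeff_nonneg (hβ1 : β ≤ 1) (hγ : 0 ≤ γ) (n : ℕ) : 0 ≤ scDefectCoeff β γ n := by
  unfold scDefectCoeff
  exact mul_nonneg (by positivity) (mul_nonneg (by positivity) (by linarith))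

theorem scDenCoeff_nonneg (hβ0 : 0 ≤ β) (hγ : 0 ≤ γ) (n : ℕ) : 0 ≤ scDenCoeff β γ n := by
  unfold scDenCoeff
  positivity

theorem one_add_succ_mul_le (hγ : 0 ≤ γ) (n : ℕ) :
    1 + ((n : ℝ) + 1) * γ ≤ (1 + γ) * ((n : ℝ) + 2) := by
  nlinarith [n.cast_nonneg (α := ℝ)]

theorem scDefectCoeff_le (hβ0 : 0 ≤ β) (hβ1 : β ≤ 1) (hγ : 0 ≤ γ) (n : ℕ) :
    scDefectCoeff β γ n ≤ (1 + γ) * ((n : ℝ) + 2) ^ 2 :=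
  calc scDefectCoeff β γ n ≤ (1 + γ) * ((n : ℝ) + 2) * ((n : ℝ) + 2) :=
        mul_le_mul (one_add_succ_mul_le hγ n) (by nlinarith [n.cast_nonneg (α := ℝ)])
          (by positivity) (by positivity)
    _ = (1 + γ) * ((n : ℝ) + 2) ^ 2 := by ring

theorem scDenCoeff_le (hβ1 : β ≤ 1) (hγ : 0 ≤ γ) (n : ℕ) :
    scDenCoeff β γ n ≤ (1 + γ) * ((n : ℝ) + 2) ^ 2 :=
  calc scDenCoeff β γ n ≤ ((n : ℝ) + 2) * ((1 + γ) * ((n : ℝ) + 2)) :=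
        mul_le_mul (by nlinarith [n.cast_nonneg (α := ℝ)]) (one_add_succ_mul_le hγ n)
          (by positivity) (by positivity)
    _ = (1 + γ) * ((n : ℝ) + 2) ^ 2 := by ring

variable {a : ℕ → ℂ} {z : ℂ}

theorem norm_scNum_sub_scDen_le (hβ0 : 0 ≤ β) (hβ1 : β ≤ 1) (hγ : 0 ≤ γ)
    (ha : Summable fun n : ℕ => ((n : ℝ) + 2) ^ 2 * ‖a n‖) (hz : ‖z‖ < 1) :
    ‖scNum γ (normalizedSeries a) z - scDen β γ (normalizedSeries a) z‖ ≤
      ‖z‖ ^ 2 * ∑' n, scDefectCoeff β γ n * ‖a n‖ := by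
  obtain ⟨h0, h1, h2⟩ := hasSum_normalizedSeries_derivs ha hz
  have hS := ((h1.mul_left (z - γ * z - (1 - γ) * β * z)).add
    (h2.mul_left (γ * z ^ 2 - γ * β * z ^ 2))).add (h0.mul_left (-((1 - (γ : ℂ)) * (1 - β))))
  refine (congrArg norm ?_).trans_le (norm_le_sq_mul_tsum_of_hasSum
    (scDefectCoeff_nonneg hβ1 hγ) hz.le (hS.congr_fun fun n => ?_)
    (summable_mul_norm_of_le_mul_sq (scDefectCoeff_nonneg hβ1 hγ) (scDefectCoeff_le hβ0 hβ1 hγ) ha))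
  · simp only [scNum, scDen]; ring
  · simp only [scDefectCoeff]; push_cast; ring

theorem norm_scDen_sub_self_le (hβ0 : 0 ≤ β) (hβ1 : β ≤ 1) (hγ : 0 ≤ γ)
    (ha : Summable fun n : ℕ => ((n : ℝ) + 2) ^ 2 * ‖a n‖) (hz : ‖z‖ < 1) :
    ‖scDen β γ (normalizedSeries a) z - z‖ ≤ ‖z‖ ^ 2 * ∑' n, scDenCoeff β γ n * ‖a n‖ := by
  obtain ⟨h0, h1, h2⟩ := hasSum_normalizedSeries_derivs ha hz
  have hS := ((h1.mul_left (γ * z + (1 - γ) * β * z)).add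
    (h2.mul_left (γ * β * z ^ 2))).add (h0.mul_left ((1 - (γ : ℂ)) * (1 - β)))
  refine (congrArg norm ?_).trans_le (norm_le_sq_mul_tsum_of_hasSum
    (scDenCoeff_nonneg hβ0 hγ) hz.le (hS.congr_fun fun n => ?_)
    (summable_mul_norm_of_le_mul_sq (scDenCoeff_nonneg hβ0 hγ) (scDenCoeff_le hβ1 hγ) ha))
  · simp only [scDen]; ring
  · simp only [scDenCoeff]; push_cast; ring

theorem tsum_scDefectCoeff_add_le (hβ0 : 0 ≤ β) (hβ1 : β ≤ 1) (hγ : 0 ≤ γ)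
    (ha : Summable fun n : ℕ => ((n : ℝ) + 2) ^ 2 * ‖a n‖)
    (hcoef : ∑' n, starWeight α β γ n * ‖a n‖ ≤ 1 - α) :
    ∑' n, scDefectCoeff β γ n * ‖a n‖ + (1 - α) * ∑' n, scDenCoeff β γ n * ‖a n‖ ≤ 1 - α := by
  rw [← tsum_mul_left, ← Summable.tsum_add
    (summable_mul_norm_of_le_mul_sq (scDefectCoeff_nonneg hβ1 hγ) (scDefectCoeff_le hβ0 hβ1 hγ) ha)
    ((summable_mul_norm_of_le_mul_sq (scDenCoeff_nonneg hβ0 hγ) (scDenCoeff_le hβ1 hγ)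
      ha).mul_left _)]
  refine le_of_eq_of_le (tsum_congr fun n => ?_) hcoef
  rw [starWeight_eq_scDefectCoeff_add]
  ring

theorem lt_re_scNum_div_scDen (hα : α < 1) (hβ0 : 0 ≤ β) (hβ1 : β ≤ 1) (hγ : 0 ≤ γ)
    (ha : Summable fun n : ℕ => ((n : ℝ) + 2) ^ 2 * ‖a n‖)
    (hcoef : ∑' n, starWeight α β γ n * ‖a n‖ ≤ 1 - α) (hz : ‖z‖ < 1) (hz0 : z ≠ 0) :
    α < (scNum γ (normalizedSeries a) z / scDen β γ (normalizedSeries a) z).re :=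
  lt_re_div_of_norm_sub_le hz0 hz hα (tsum_scDefectCoeff_add_le hβ0 hβ1 hγ ha hcoef)
    (norm_scNum_sub_scDen_le hβ0 hβ1 hγ ha hz) (norm_scDen_sub_self_le hβ0 hβ1 hγ ha hz)

end Criterion

theorem stmt13_general (lam μ α β γ : ℝ) (hlam : 1 ≤ lam) (hμ : 0.462 < μ)
    (hα1 : α < 1) (hβ0 : 0 ≤ β) (hβ1 : β < 1) (hγ0 : 0 ≤ γ)
    (hcond : ((1 - α * β) * γ + (1 - α * β + (2 - (1 + β) * α) * γ) * μ) / μ ^ 2 *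
      Real.exp (1 / μ) ≤ 1 - α) :
    (Summable (fun n : ℕ =>
      (1 + ((n : ℝ) + 1) * γ) * (((n : ℝ) + 2) - α - ((n : ℝ) + 1) * α * β) *
        (Real.Gamma μ / Real.Gamma (lam * ((n : ℝ) + 1) + μ)) * Real.exp (-1 / μ) /
        (Nat.factorial (n + 1) : ℝ)) ∧
    ∑' n : ℕ,
      (1 + ((n : ℝ) + 1) * γ) * (((n : ℝ) + 2) - α - ((n : ℝ) + 1) * α * β) *
        (Real.Gamma μ / Real.Gamma (lam * ((n : ℝ) + 1) + μ)) * Real.exp (-1 / μ) /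
        (Nat.factorial (n + 1) : ℝ) ≤ 1 - α) ∧
    (∀ z ∈ Metric.ball (0 : ℂ) 1, z ≠ 0 →
      α < (((z * deriv (Ffun lam μ) z + (γ : ℂ) * z ^ 2 * deriv (deriv (Ffun lam μ)) z) /
        ((γ : ℂ) * z * (deriv (Ffun lam μ) z + (β : ℂ) * z * deriv (deriv (Ffun lam μ)) z) +
          (1 - (γ : ℂ)) * ((β : ℂ) * z * deriv (Ffun lam μ) z +
            (1 - (β : ℂ)) * Ffun lam μ z))).re)) := by
  obtain ⟨hsum, hle⟩ :=
    summable_starWeight_mul_Fcoeff_and_tsum_le hlam hμ hα1 hβ0 hβ1.le hγ0 hcond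
  have hnorm (n : ℕ) : ‖(Fcoeff lam μ n : ℂ)‖ = Fcoeff lam μ n :=
    (Complex.norm_real _).trans (Real.norm_of_nonneg (Fcoeff_nonneg hlam hμ n))
  refine ⟨⟨hsum.congr fun n => ?_, (tsum_congr fun n => ?_).trans_le hle⟩, fun z hz hz0 => ?_⟩
  · simp only [starWeight, Fcoeff]; ring
  · simp only [starWeight, Fcoeff]; ring
  -- `Ffun lam μ` is `normalizedSeries (fun n => Fcoeff lam μ n)` by definition
  · exact lt_re_scNum_div_scDen (a := fun n => (Fcoeff lam μ n : ℂ)) hα1 hβ0 hβ1.le hγ0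
      (by simpa only [hnorm] using summable_sq_mul_Fcoeff hlam hμ)
      (by simpa only [hnorm] using hle) (mem_ball_zero_iff.1 hz) hz0

theorem stmt13 (lam μ α β γ : ℝ) (hlam : 1 ≤ lam) (hμ : 0.462 < μ)
    (hα0 : 0 ≤ α) (hα1 : α < 1) (hβ0 : 0 ≤ β) (hβ1 : β < 1) (hγ0 : 0 ≤ γ) (hγ1 : γ ≤ 1)
    (hcond : ((1 - α * β) * γ + (1 - α * β + (2 - (1 + β) * α) * γ) * μ) / μ ^ 2 *
      Real.exp (1 / μ) ≤ 1 - α) :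
    (Summable (fun n : ℕ =>
      (1 + ((n : ℝ) + 1) * γ) * (((n : ℝ) + 2) - α - ((n : ℝ) + 1) * α * β) *
        (Real.Gamma μ / Real.Gamma (lam * ((n : ℝ) + 1) + μ)) * Real.exp (-1 / μ) /
        (Nat.factorial (n + 1) : ℝ)) ∧
    ∑' n : ℕ,
      (1 + ((n : ℝ) + 1) * γ) * (((n : ℝ) + 2) - α - ((n : ℝ) + 1) * α * β) *
        (Real.Gamma μ / Real.Gamma (lam * ((n : ℝ) + 1) + μ)) * Real.exp (-1 / μ) /
        (Nat.factorial (n + 1) : ℝ) ≤ 1 - α) ∧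
    (∀ z ∈ Metric.ball (0 : ℂ) 1, z ≠ 0 →
      α < (((z * deriv (Ffun lam μ) z + (γ : ℂ) * z ^ 2 * deriv (deriv (Ffun lam μ)) z) /
        ((γ : ℂ) * z * (deriv (Ffun lam μ) z + (β : ℂ) * z * deriv (deriv (Ffun lam μ)) z) +
          (1 - (γ : ℂ)) * ((β : ℂ) * z * deriv (Ffun lam μ) z +
            (1 - (β : ℂ)) * Ffun lam μ z))).re)) :=
  stmt13_general lam μ α β γ hlam hμ hα1 hβ0 hβ1 hγ0 hcond
end

section
/- Let λ ≥ 1, μ > 0.462, α, β ∈ [0,1), γ ∈ [0,1]. If [(1-αβ)γ + (1-αβ + (2-(1+β)α)γ)μ] μ^{-2} e^{1/μ} ≤ 1-α, then the function G_{λ,μ}(z) = z - Σ_{n≥2} [Γ(μ)/Γ(λ(n-1)+μ)] e^{-1/μ}/(n-1)! · z^n belongs to TS*C(α,β;γ), i.e., Σ_{n≥2} (1+(n-1)γ)(n-α-(n-1)αβ) [Γ(μ)/Γ(λ(n-1)+μ)] e^{-1/μ}/(n-1)! ≤ 1-α. -/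
open Real

set_option maxHeartbeats 1000000 in
theorem stmt15 (lam μ α β γ : ℝ) (hlam : 1 ≤ lam) (hμ : 0.462 < μ)
    (hα0 : 0 ≤ α) (hα1 : α < 1) (hβ0 : 0 ≤ β) (hβ1 : β < 1) (hγ0 : 0 ≤ γ) (hγ1 : γ ≤ 1)
    (hcond : ((1 - α * β) * γ + (1 - α * β + (2 - (1 + β) * α) * γ) * μ) / μ ^ 2 *
      Real.exp (1 / μ) ≤ 1 - α) :
    Summable (fun n : ℕ =>
      (1 + ((n : ℝ) + 1) * γ) * (((n : ℝ) + 2) - α - ((n : ℝ) + 1) * α * β) *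
        (Real.Gamma μ / Real.Gamma (lam * ((n : ℝ) + 1) + μ)) * Real.exp (-1 / μ) /
        (Nat.factorial (n + 1) : ℝ)) ∧
    ∑' n : ℕ,
      (1 + ((n : ℝ) + 1) * γ) * (((n : ℝ) + 2) - α - ((n : ℝ) + 1) * α * β) *
        (Real.Gamma μ / Real.Gamma (lam * ((n : ℝ) + 1) + μ)) * Real.exp (-1 / μ) /
        (Nat.factorial (n + 1) : ℝ) ≤ 1 - α := by
  have hμ0 : 0 < μ := by linarith [hμ]
  set x : ℝ := 1 / μ with hxdef
  have hx0 : 0 < x := by positivity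
  have hαβ : α * β < 1 := by nlinarith
  set p0 : ℝ := 1 - α with hp0def
  set p1 : ℝ := (1 - α * β) + γ * (1 - α) with hp1def
  set p2 : ℝ := γ * (1 - α * β) with hp2def
  have hp0 : 0 < p0 := by simp only [hp0def]; linarith
  have hp1 : 0 < p1 := by simp only [hp1def]; nlinarith
  have hp2 : 0 ≤ p2 := by simp only [hp2def]; nlinarith
  have hE0 : (0:ℝ) < Real.exp x := Real.exp_pos x
  -- rewrite the condition
  have hcond' : (p1 * x + p2 * (x ^ 2 + x)) * Real.exp x ≤ 1 - α := by
    have heq : ((1 - α * β) * γ + (1 - α * β + (2 - (1 + β) * α) * γ) * μ) / μ ^ 2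
        = p1 * x + p2 * (x ^ 2 + x) := by
      simp only [hp1def, hp2def, hxdef]
      field_simp
      ring
    rw [heq, hxdef] at hcond
    exact hcond
  -- μ > 1
  have hμ1 : 1 < μ := by
    by_contra h
    push_neg at h
    have hx1 : 1 ≤ x := by
      rw [hxdef, le_div_iff₀ hμ0]; linarith
    have hp1x : (1 - α * β) * x ≤ p1 * x + p2 * (x ^ 2 + x) := by
      have h1 : 0 ≤ γ * (1 - α) * x := by positivity
      have h2 : 0 ≤ p2 * (x ^ 2 + x) := by positivity
      simp only [hp1def] at *
      nlinarith
    have h1 : (1 - α * β) * x * Real.exp x ≤ 1 - α :=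
      le_trans (by nlinarith) hcond'
    have h2 : 1 < Real.exp x := by nlinarith [Real.add_one_le_exp x]
    have h3 : 1 - α ≤ 1 - α * β := by nlinarith
    have hxe : 1 < x * Real.exp x := by nlinarith
    have h4 : (1 - α) * 1 < (1 - α) * (x * Real.exp x) :=
      mul_lt_mul_of_pos_left hxe (by linarith)
    have h5 : (1 - α) * (x * Real.exp x) ≤ (1 - α * β) * (x * Real.exp x) :=
      mul_le_mul_of_nonneg_right h3 (by nlinarith)
    nlinarith
  -- Gamma bound : Gamma μ / Gamma (lam * m + μ) ≤ x ^ m for m ≥ 1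
  have hΓμ : 0 < Real.Gamma μ := Real.Gamma_pos_of_pos hμ0
  have hgam : ∀ m : ℕ, 1 ≤ m → Real.Gamma μ / Real.Gamma (lam * m + μ) ≤ x ^ m := by
    intro m hm
    have h1 : ∀ k : ℕ, μ ^ k * Real.Gamma μ ≤ Real.Gamma (μ + k) := by
      intro k
      induction k with
      | zero => simp
      | succ k ih =>
        have hk : (0:ℝ) < μ + k := by positivity
        have hrec : Real.Gamma (μ + (k + 1 : ℕ)) = (μ + k) * Real.Gamma (μ + k) := by
          have hcst : (((k + 1 : ℕ)) : ℝ) = (k : ℝ) + 1 := by push_cast; ring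
          rw [hcst, show μ + ((k:ℝ) + 1) = (μ + (k:ℝ)) + 1 by ring,
            Real.Gamma_add_one hk.ne']
        rw [hrec]
        have hΓk : 0 < Real.Gamma (μ + k) := Real.Gamma_pos_of_pos hk
        calc μ ^ (k+1) * Real.Gamma μ = μ * (μ ^ k * Real.Gamma μ) := by ring
          _ ≤ μ * Real.Gamma (μ + k) := by nlinarith
          _ ≤ (μ + k) * Real.Gamma (μ + k) := by nlinarith [Nat.cast_nonneg (α := ℝ) k]
    have hm1 : (1:ℝ) ≤ (m:ℝ) := by exact_mod_cast hm
    have h2 : Real.Gamma (μ + m) ≤ Real.Gamma (lam * m + μ) := by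
      have hmono := Real.Gamma_strictMonoOn_Ici.monotoneOn
      have ha : (μ + m : ℝ) ∈ Set.Ici (2:ℝ) := by
        simp only [Set.mem_Ici]; linarith
      have hb : (lam * m + μ : ℝ) ∈ Set.Ici (2:ℝ) := by
        simp only [Set.mem_Ici]; nlinarith
      have hab : (μ + m : ℝ) ≤ lam * m + μ := by nlinarith
      exact hmono ha hb hab
    have h3 : μ ^ m * Real.Gamma μ ≤ Real.Gamma (lam * m + μ) := le_trans (h1 m) h2
    have hpos : (0:ℝ) < μ ^ m * Real.Gamma μ := by positivity
    have h4 : Real.Gamma μ / Real.Gamma (lam * m + μ) ≤ Real.Gamma μ / (μ ^ m * Real.Gamma μ) := by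
      gcongr
    calc Real.Gamma μ / Real.Gamma (lam * m + μ) ≤ Real.Gamma μ / (μ ^ m * Real.Gamma μ) := h4
      _ = x ^ m := by
        rw [hxdef, div_pow, one_pow]
        field_simp
  -- auxiliary series
  set u : ℕ → ℝ := fun n => x ^ (n+1) / (Nat.factorial (n+1) : ℝ) with hudef
  set v : ℕ → ℝ := fun n => x ^ (n+1) / (Nat.factorial n : ℝ) with hvdef
  set s : ℕ → ℝ := fun n => (n:ℝ) * x ^ (n+1) / (Nat.factorial n : ℝ) with hsdef
  have Sbase : Summable (fun n : ℕ => x ^ n / (Nat.factorial n : ℝ)) :=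
    Real.summable_pow_div_factorial x
  have Su : Summable u := by
    have := (summable_nat_add_iff 1).mpr Sbase
    exact this
  have Sv : Summable v := by
    refine (Sbase.mul_left x).congr fun n => ?_
    simp only [hvdef, pow_succ]
    ring
  have Ss : Summable s := by
    have h : Summable (fun m : ℕ => s (m + 1)) := by
      refine (Sbase.mul_left (x^2)).congr fun m => ?_
      simp only [hsdef]
      rw [Nat.factorial_succ]
      push_cast
      have hfm : (Nat.factorial m : ℝ) ≠ 0 := by
        exact_mod_cast (Nat.factorial_pos m).ne'
      field_simp
      ring
    exact (summable_nat_add_iff 1).mp h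
  have hexp : Real.exp x = ∑' n : ℕ, x ^ n / (Nat.factorial n : ℝ) := by
    rw [Real.exp_eq_exp_ℝ, NormedSpace.exp_eq_tsum_div]
  have Tu : ∑' n, u n = Real.exp x - 1 := by
    have h := Summable.tsum_eq_zero_add Sbase
    rw [hexp, h]
    simp [hudef]
  have Tv : ∑' n, v n = x * Real.exp x := by
    rw [hexp, ← tsum_mul_left]
    refine tsum_congr fun n => ?_
    simp only [hvdef, pow_succ]
    ring
  have Ts : ∑' n, s n = x ^ 2 * Real.exp x := by
    rw [Summable.tsum_eq_zero_add Ss]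
    have h0 : s 0 = 0 := by simp [hsdef]
    rw [h0, zero_add, hexp, ← tsum_mul_left]
    refine tsum_congr fun m => ?_
    simp only [hsdef]
    rw [Nat.factorial_succ]
    push_cast
    have hfm : (Nat.factorial m : ℝ) ≠ 0 := by
      exact_mod_cast (Nat.factorial_pos m).ne'
    field_simp
    ring
  -- the bounding series
  set B : ℕ → ℝ := fun n => Real.exp (-x) * (p0 * u n + p1 * v n + p2 * (s n + v n)) with hBdef
  set f : ℕ → ℝ := fun n : ℕ =>
      (1 + ((n : ℝ) + 1) * γ) * (((n : ℝ) + 2) - α - ((n : ℝ) + 1) * α * β) *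
        (Real.Gamma μ / Real.Gamma (lam * ((n : ℝ) + 1) + μ)) * Real.exp (-1 / μ) /
        (Nat.factorial (n + 1) : ℝ) with hfdef
  have hexpeq : Real.exp (-1 / μ) = Real.exp (-x) := by simp only [hxdef]; rw [neg_div]
  have hcoeff : ∀ n : ℕ, (0:ℝ) ≤ (1 + ((n : ℝ) + 1) * γ) ∧
      (0:ℝ) ≤ (((n : ℝ) + 2) - α - ((n : ℝ) + 1) * α * β) := by
    intro n
    have hn : (0:ℝ) ≤ (n:ℝ) := Nat.cast_nonneg n
    constructor
    · nlinarith
    · nlinarith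
  have hf0 : ∀ n, 0 ≤ f n := by
    intro n
    simp only [hfdef]
    have h1 := (hcoeff n).1
    have h2 := (hcoeff n).2
    have h3 : 0 < Real.Gamma (lam * ((n:ℝ) + 1) + μ) := by
      apply Real.Gamma_pos_of_pos
      have hn : (0:ℝ) ≤ (n:ℝ) := Nat.cast_nonneg n
      nlinarith
    positivity
  have hfB : ∀ n, f n ≤ B n := by
    intro n
    have hcast : ((n:ℝ) + 1) = ((n + 1 : ℕ) : ℝ) := by push_cast; ring
    have hg : Real.Gamma μ / Real.Gamma (lam * ((n:ℝ) + 1) + μ) ≤ x ^ (n+1) := by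
      rw [hcast]
      exact hgam (n+1) (Nat.le_add_left 1 n)
    have h1 := (hcoeff n).1
    have h2 := (hcoeff n).2
    have hstep : f n ≤ (1 + ((n : ℝ) + 1) * γ) * (((n : ℝ) + 2) - α - ((n : ℝ) + 1) * α * β) *
        x ^ (n+1) * Real.exp (-x) / (Nat.factorial (n + 1) : ℝ) := by
      simp only [hfdef, hexpeq]
      have hA : 0 ≤ (1 + ((n : ℝ) + 1) * γ) * (((n : ℝ) + 2) - α - ((n : ℝ) + 1) * α * β) :=
        mul_nonneg h1 h2
      have step1 := mul_le_mul_of_nonneg_left hg hA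
      have step2 := mul_le_mul_of_nonneg_right step1 (Real.exp_nonneg (-x))
      have step3 := mul_le_mul_of_nonneg_right step2
        (by positivity : (0:ℝ) ≤ ((Nat.factorial (n+1) : ℝ))⁻¹)
      calc (1 + ((n : ℝ) + 1) * γ) * (((n : ℝ) + 2) - α - ((n : ℝ) + 1) * α * β) *
            (Real.Gamma μ / Real.Gamma (lam * ((n:ℝ) + 1) + μ)) * Real.exp (-x) /
            (Nat.factorial (n + 1) : ℝ)
          = (1 + ((n : ℝ) + 1) * γ) * (((n : ℝ) + 2) - α - ((n : ℝ) + 1) * α * β) *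
            (Real.Gamma μ / Real.Gamma (lam * ((n:ℝ) + 1) + μ)) * Real.exp (-x) *
            ((Nat.factorial (n + 1) : ℝ))⁻¹ := by rw [div_eq_mul_inv]
        _ ≤ (1 + ((n : ℝ) + 1) * γ) * (((n : ℝ) + 2) - α - ((n : ℝ) + 1) * α * β) *
            x ^ (n+1) * Real.exp (-x) * ((Nat.factorial (n + 1) : ℝ))⁻¹ := by
            calc _ = (1 + ((n : ℝ) + 1) * γ) * (((n : ℝ) + 2) - α - ((n : ℝ) + 1) * α * β) *
                  (Real.Gamma μ / Real.Gamma (lam * ((n:ℝ) + 1) + μ)) * Real.exp (-x) *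
                  ((Nat.factorial (n + 1) : ℝ))⁻¹ := rfl
              _ ≤ _ := by
                  refine mul_le_mul_of_nonneg_right ?_ (by positivity)
                  refine mul_le_mul_of_nonneg_right ?_ (Real.exp_nonneg (-x))
                  exact mul_le_mul_of_nonneg_left hg hA
        _ = (1 + ((n : ℝ) + 1) * γ) * (((n : ℝ) + 2) - α - ((n : ℝ) + 1) * α * β) *
            x ^ (n+1) * Real.exp (-x) / (Nat.factorial (n + 1) : ℝ) := by
            rw [div_eq_mul_inv]
    refine hstep.trans_eq ?_
    simp only [hBdef, hudef, hvdef, hsdef, hp0def, hp1def, hp2def]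
    rw [Nat.factorial_succ]
    push_cast
    have hfn : (Nat.factorial n : ℝ) ≠ 0 := by
      exact_mod_cast (Nat.factorial_pos n).ne'
    have hn1 : ((n:ℝ) + 1) ≠ 0 := by positivity
    field_simp
    ring
  have SB : Summable B := by
    apply Summable.mul_left
    exact ((Su.mul_left p0).add (Sv.mul_left p1)).add ((Ss.add Sv).mul_left p2)
  have Sf : Summable f := Summable.of_nonneg_of_le hf0 hfB SB
  have TB : ∑' n, B n = Real.exp (-x) * (p0 * (Real.exp x - 1) + p1 * (x * Real.exp x)
      + p2 * (x ^ 2 * Real.exp x + x * Real.exp x)) := by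
    simp only [hBdef]
    rw [tsum_mul_left]
    congr 1
    rw [Summable.tsum_add ((Su.mul_left p0).add (Sv.mul_left p1)) ((Ss.add Sv).mul_left p2),
      Summable.tsum_add (Su.mul_left p0) (Sv.mul_left p1), tsum_mul_left, tsum_mul_left, tsum_mul_left,
      Summable.tsum_add Ss Sv, Tu, Tv, Ts]
  have hfinal : ∑' n, B n ≤ 1 - α := by
    rw [TB]
    have hprod : Real.exp (-x) * Real.exp x = 1 := by
      rw [← Real.exp_add]; simp
    have hEneg : 0 < Real.exp (-x) := Real.exp_pos _
    nlinarith [mul_le_mul_of_nonneg_left hcond' hEneg.le]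
  exact ⟨Sf, le_trans (Summable.tsum_le_tsum hfB Sf SB) hfinal⟩
end

section
/- Let λ ≥ 1, μ > 0.462, α, β ∈ [0,1). If (1-β)α(e^{1/μ}-1) ≤ 1-α, then Σ_{n≥2} (n-α-(n-1)αβ) · [Γ(μ)/Γ(λ(n-1)+μ)] · e^{-1/μ}/n! ≤ 1-α, i.e., the function Ĝ_{λ,μ}(z) = z - Σ_{n≥2} [Γ(μ)/Γ(λ(n-1)+μ)] e^{-1/μ}/n! · z^n belongs to TS*(α,β). -/
/-!
Since `n + 2 - α - (n + 1)αβ ≤ (n + 2)(1 - αβ)`, the sum is at most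
`(1 - αβ) e^{-1/μ} ∑_{m ≥ 1} Γ(μ) / (Γ(λm + μ) m!)`, and the hypothesis on `α, β` says exactly that
`(1 - αβ) e^{-1/μ} (e^{1/μ} - 1) ≤ 1 - α`. So it suffices to bound the last series by
`e^{1/μ} - 1 = ∑_{m ≥ 1} μ^{-m} / m!`.

As `Γ` increases on `[2, ∞)`, `Γ(λm + μ) ≥ Γ(μ + m) ≥ μ (μ + 1)^{m-1} Γ(μ)` whenever `μ + m ≥ 2`,
which covers every term when `μ ≥ 1`. When `0.462 < μ < 1`, the term `m = 1` only gets the factor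
`4/π` from `Γ(λ + μ) ≥ Γ(3/2)² = π/4` (log-convexity) and `Γ(μ + 1) ≤ 1`. This loss is recovered
from the other terms, because `(μ + 1)⁻¹ < 171/250` while `μ⁻¹ > 1`, and it comes down to
`4/π + (171/500) / (1 - 57/250) ≤ e - 1`.
-/

open Real
open scoped Nat

namespace Real

lemma Gamma_le_one_of_mem_Icc {t : ℝ} (h1 : 1 ≤ t) (h2 : t ≤ 2) : Gamma t ≤ 1 := by
  simpa [Gamma_one, Gamma_two] using
    convexOn_Gamma.le_max_of_mem_Icc (by norm_num : (1 : ℝ) ∈ Set.Ioi 0)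
      (by norm_num : (2 : ℝ) ∈ Set.Ioi 0) ⟨h1, h2⟩

lemma one_le_Gamma {t : ℝ} (h : 2 ≤ t) : 1 ≤ Gamma t :=
  Gamma_two ▸ Gamma_strictMonoOn_Ici.monotoneOn Set.self_mem_Ici h h

lemma pi_div_four_le_Gamma {t : ℝ} (h : 1 ≤ t) : π / 4 ≤ Gamma t := by
  rcases le_total 2 t with h2 | h2
  · linarith [one_le_Gamma h2, pi_lt_four]
  -- `Γ(3/2)² ≤ Γ(t) Γ(3 - t) ≤ Γ(t)` by log-convexity, as `Γ ≤ 1` on `[1, 2]`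
  have hmid := Gamma_mul_add_mul_le_rpow_Gamma_mul_rpow_Gamma (s := t) (t := 3 - t)
    (by linarith) (by linarith) one_half_pos one_half_pos (add_halves 1)
  have h32 : Gamma (1 / 2 * t + 1 / 2 * (3 - t)) = √π / 2 := by
    rw [show 1 / 2 * t + 1 / 2 * (3 - t) = 1 / 2 + 1 by ring, Gamma_add_one (by norm_num),
      Gamma_one_half_eq]
    ring
  have hle : Gamma (3 - t) ^ (1 / 2 : ℝ) ≤ 1 :=
    rpow_le_one (Gamma_pos_of_pos (by linarith)).le
      (Gamma_le_one_of_mem_Icc (by linarith) (by linarith)) one_half_pos.le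
  have hroot : √π / 2 ≤ Gamma t ^ (1 / 2 : ℝ) := by
    rw [← h32]
    exact hmid.trans (mul_le_of_le_one_right (by positivity) hle)
  calc π / 4 = (√π / 2) ^ 2 := by rw [div_pow, sq_sqrt pi_pos.le]; norm_num
    _ ≤ (Gamma t ^ (1 / 2 : ℝ)) ^ 2 := by gcongr
    _ = Gamma t := by
      rw [← rpow_natCast, ← rpow_mul (Gamma_pos_of_pos (by linarith)).le]; norm_num

lemma pow_mul_Gamma_le_Gamma_add_nat {a : ℝ} (ha : 0 < a) (k : ℕ) :
    a ^ k * Gamma a ≤ Gamma (a + k) := by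
  induction k with
  | zero => simp
  | succ k ih =>
    have hak : 0 < a + k := by positivity
    calc a ^ (k + 1) * Gamma a = a * (a ^ k * Gamma a) := by ring
      _ ≤ (a + k) * Gamma (a + k) := by
        gcongr
        linarith [k.cast_nonneg (α := ℝ)]
      _ = Gamma (a + (k + 1 : ℕ)) := by
        rw [Nat.cast_succ, ← add_assoc, Gamma_add_one hak.ne']

end Real

lemma hasSum_pow_succ_div_factorial (x : ℝ) :
    HasSum (fun n : ℕ => x ^ (n + 1) / (n + 1)!) (exp x - 1) := by
  simpa [exp_eq_exp_ℝ] using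
    (hasSum_nat_add_iff' 1).mpr (NormedSpace.expSeries_div_hasSum_exp (𝔸 := ℝ) x)

lemma mul_exp_one_sub_one_le_exp_sub_one {x : ℝ} (hx : 1 ≤ x) :
    x * (exp 1 - 1) ≤ exp x - 1 := by
  have h : exp 1 * x ≤ exp x := by
    rw [show exp x = exp 1 * exp (x - 1) by rw [← exp_add]; ring_nf]
    gcongr
    linarith [add_one_le_exp (x - 1)]
  nlinarith

lemma summable_and_tsum_le_of_hasSum {ι : Type*} {f g : ι → ℝ} {b : ℝ} (hf : ∀ i, 0 ≤ f i)
    (hfg : ∀ i, f i ≤ g i) (hg : HasSum g b) : Summable f ∧ ∑' i, f i ≤ b := by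
  have hs : Summable f := hg.summable.of_nonneg_of_le hf hfg
  exact ⟨hs, hg.tsum_eq ▸ hs.tsum_le_tsum hfg hg.summable⟩

noncomputable def gammaRatio (lam μ t : ℝ) : ℝ := Gamma μ / Gamma (lam * t + μ)

section GammaRatio

variable {lam μ : ℝ}

lemma gammaRatio_nonneg (hlam : 0 ≤ lam) (hμ : 0 < μ) {t : ℝ} (ht : 0 ≤ t) :
    0 ≤ gammaRatio lam μ t :=
  div_nonneg (Gamma_pos_of_pos hμ).le (Gamma_pos_of_pos (by positivity)).le

lemma gammaRatio_le_of_two_le (hlam : 1 ≤ lam) (hμ : 0 < μ) {n : ℕ} (hn : 2 ≤ μ + n + 1) :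
    gammaRatio lam μ (n + 1) ≤ μ⁻¹ * (μ + 1)⁻¹ ^ n := by
  have hpos : 0 < Gamma (lam * (n + 1) + μ) := Gamma_pos_of_pos (by positivity)
  have key : μ * (μ + 1) ^ n * Gamma μ ≤ Gamma (lam * (n + 1) + μ) :=
    calc μ * (μ + 1) ^ n * Gamma μ = (μ + 1) ^ n * Gamma (μ + 1) := by
          rw [Gamma_add_one hμ.ne']; ring
      _ ≤ Gamma (μ + 1 + n) := pow_mul_Gamma_le_Gamma_add_nat (by positivity) n
      _ ≤ Gamma (lam * (n + 1) + μ) :=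
          Gamma_strictMonoOn_Ici.monotoneOn (by simpa [add_right_comm] using hn)
            (by simp only [Set.mem_Ici]; nlinarith) (by nlinarith)
  rw [gammaRatio, div_le_iff₀ hpos, inv_pow, ← mul_inv, inv_mul_eq_div,
    le_div_iff₀ (by positivity)]
  linarith

lemma gammaRatio_one_le (hlam : 1 ≤ lam) (hμ0 : 0 < μ) (hμ1 : μ ≤ 1) :
    gammaRatio lam μ 1 ≤ 4 / π * μ⁻¹ := by
  have hnum : Gamma μ ≤ μ⁻¹ := by
    have h := Gamma_le_one_of_mem_Icc (t := μ + 1) (by linarith) (by linarith)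
    rw [Gamma_add_one hμ0.ne'] at h
    rw [← one_div, le_div_iff₀ hμ0]
    linarith
  have hden : π / 4 ≤ Gamma (lam * 1 + μ) := pi_div_four_le_Gamma (by linarith)
  calc gammaRatio lam μ 1 ≤ μ⁻¹ / (π / 4) :=
        div_le_div₀ (by positivity) hnum (by positivity) hden
    _ = 4 / π * μ⁻¹ := by field_simp

end GammaRatio

lemma four_div_pi_add_geometric_le : 4 / π + 171 / 500 * (1 - 57 / 250)⁻¹ ≤ exp 1 - 1 := by
  have hπ : 4 / π ≤ 1.2733 := by
    rw [div_le_iff₀ pi_pos]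
    linarith [pi_gt_d6]
  norm_num at hπ ⊢
  linarith [exp_one_gt_d9]

section GammaSeries

variable {lam μ : ℝ}

lemma summable_and_tsum_gammaRatio_le_of_one_le (hlam : 1 ≤ lam) (hμ : 1 ≤ μ) :
    Summable (fun n : ℕ => gammaRatio lam μ (n + 1) / (n + 1)!) ∧
      ∑' n : ℕ, gammaRatio lam μ (n + 1) / (n + 1)! ≤ exp μ⁻¹ - 1 := by
  have hμ0 : 0 < μ := by linarith
  refine summable_and_tsum_le_of_hasSum
    (fun n => div_nonneg (gammaRatio_nonneg (by linarith) hμ0 (by positivity)) (by positivity))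
    (fun n => ?_) (hasSum_pow_succ_div_factorial μ⁻¹)
  gcongr
  calc gammaRatio lam μ (n + 1) ≤ μ⁻¹ * (μ + 1)⁻¹ ^ n :=
        gammaRatio_le_of_two_le hlam hμ0 (by linarith [n.cast_nonneg (α := ℝ)])
    _ ≤ μ⁻¹ * μ⁻¹ ^ n := by gcongr; linarith
    _ = μ⁻¹ ^ (n + 1) := by ring

lemma summable_and_tsum_gammaRatio_le_of_lt_one (hlam : 1 ≤ lam) (hμ : 0.462 < μ)
    (hμ1 : μ < 1) :
    Summable (fun n : ℕ => gammaRatio lam μ (n + 1) / (n + 1)!) ∧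
      ∑' n : ℕ, gammaRatio lam μ (n + 1) / (n + 1)! ≤ exp μ⁻¹ - 1 := by
  have hμ0 : 0 < μ := by linarith
  have hhead : gammaRatio lam μ ((0 : ℕ) + 1) / (0 + 1)! ≤ 4 / π * μ⁻¹ := by
    simpa using gammaRatio_one_le hlam hμ0 hμ1.le
  have htail (n : ℕ) : gammaRatio lam μ ((n + 1 : ℕ) + 1) / (n + 1 + 1)! ≤
      μ⁻¹ * (171 / 500) * (57 / 250) ^ n := by
    have hratio : gammaRatio lam μ ((n + 1 : ℕ) + 1) ≤ μ⁻¹ * (171 / 250) ^ (n + 1) :=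
      calc gammaRatio lam μ ((n + 1 : ℕ) + 1) ≤ μ⁻¹ * (μ + 1)⁻¹ ^ (n + 1) :=
            gammaRatio_le_of_two_le hlam hμ0 (by push_cast; linarith [n.cast_nonneg (α := ℝ)])
        _ ≤ μ⁻¹ * (171 / 250) ^ (n + 1) := by
            gcongr
            rw [inv_le_iff_one_le_mul₀ (by linarith)]
            norm_num at hμ ⊢
            linarith
    have hfact : (2 * 3 ^ n : ℝ) ≤ (n + 1 + 1)! := by
      exact_mod_cast (Nat.factorial_mul_pow_le_factorial (m := 2) (n := n)).trans_eq
        (by rw [add_comm])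
    calc gammaRatio lam μ ((n + 1 : ℕ) + 1) / (n + 1 + 1)! ≤
          μ⁻¹ * (171 / 250) ^ (n + 1) / (2 * 3 ^ n) := by
          gcongr
      _ = μ⁻¹ * (171 / 500) * (57 / 250) ^ n := by
          rw [div_eq_iff (by positivity), pow_succ,
            show (171 / 250 : ℝ) = 57 / 250 * 3 by norm_num, mul_pow]
          ring
  obtain ⟨htail_summable, htail_le⟩ := summable_and_tsum_le_of_hasSum
    (fun n => div_nonneg (gammaRatio_nonneg (by linarith) hμ0 (by positivity)) (by positivity))
    htail ((hasSum_geometric_of_lt_one (by norm_num) (by norm_num)).mul_left (μ⁻¹ * (171 / 500)))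
  have hsummable := (summable_nat_add_iff
    (f := fun n : ℕ => gammaRatio lam μ (n + 1) / (n + 1)!) 1).mp htail_summable
  refine ⟨hsummable, ?_⟩
  rw [hsummable.tsum_eq_zero_add]
  calc _ ≤ 4 / π * μ⁻¹ + μ⁻¹ * (171 / 500) * (1 - 57 / 250)⁻¹ := add_le_add hhead htail_le
    _ = μ⁻¹ * (4 / π + 171 / 500 * (1 - 57 / 250)⁻¹) := by ring
    _ ≤ μ⁻¹ * (exp 1 - 1) := by gcongr; exact four_div_pi_add_geometric_le
    _ ≤ exp μ⁻¹ - 1 := mul_exp_one_sub_one_le_exp_sub_one (one_le_inv₀ hμ0 |>.mpr hμ1.le)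

lemma summable_and_tsum_gammaRatio_le (hlam : 1 ≤ lam) (hμ : 0.462 < μ) :
    Summable (fun n : ℕ => gammaRatio lam μ (n + 1) / (n + 1)!) ∧
      ∑' n : ℕ, gammaRatio lam μ (n + 1) / (n + 1)! ≤ exp μ⁻¹ - 1 := by
  rcases le_or_gt 1 μ with hμ1 | hμ1
  · exact summable_and_tsum_gammaRatio_le_of_one_le hlam hμ1
  · exact summable_and_tsum_gammaRatio_le_of_lt_one hlam hμ hμ1

end GammaSeries

lemma coeff_mul_div_factorial_nonneg_and_le {α β r e : ℝ} (hα0 : 0 ≤ α) (hα1 : α < 1)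
    (hβ1 : β < 1) (hr : 0 ≤ r) (he : 0 ≤ e) (n : ℕ) :
    0 ≤ ((n : ℝ) + 2 - α - ((n : ℝ) + 1) * α * β) * r * e / (n + 2)! ∧
      ((n : ℝ) + 2 - α - ((n : ℝ) + 1) * α * β) * r * e / (n + 2)! ≤
        (1 - α * β) * e * (r / (n + 1)!) := by
  set c : ℝ := (n : ℝ) + 2 - α - ((n : ℝ) + 1) * α * β
  have hαβ : α * β ≤ α := mul_le_of_le_one_right hα0 hβ1.le
  have hn : (0 : ℝ) < n + 2 := by positivity
  have hc : 0 ≤ c := by nlinarith [n.cast_nonneg (α := ℝ)]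
  have hc_div : c / (n + 2) ≤ 1 - α * β := by
    rw [div_le_iff₀ hn]
    nlinarith
  have hsplit : c * r * e / (n + 2)! = c / (n + 2) * e * (r / (n + 1)!) := by
    rw [Nat.factorial_succ]
    push_cast
    field_simp
    ring
  rw [hsplit]
  exact ⟨by positivity, by gcongr⟩

lemma mul_exp_neg_mul_exp_sub_one_le {α β x : ℝ} (h : (1 - β) * α * (exp x - 1) ≤ 1 - α) :
    (1 - α * β) * exp (-x) * (exp x - 1) ≤ 1 - α := by
  have hinv : exp (-x) * exp x = 1 := by rw [← exp_add, neg_add_cancel, exp_zero]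
  linear_combination mul_le_mul_of_nonneg_left h (exp_pos (-x)).le + (1 - α) * hinv

theorem stmt17_general (lam μ α β : ℝ) (hlam : 1 ≤ lam) (hμ : 0.462 < μ)
    (hα0 : 0 ≤ α) (hα1 : α < 1) (hβ1 : β < 1)
    (hcond : (1 - β) * α * (Real.exp (1 / μ) - 1) ≤ 1 - α) :
    Summable (fun n : ℕ =>
      (((n : ℝ) + 2) - α - ((n : ℝ) + 1) * α * β) *
        (Real.Gamma μ / Real.Gamma (lam * ((n : ℝ) + 1) + μ)) * Real.exp (-1 / μ) /
        (Nat.factorial (n + 2) : ℝ)) ∧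
    ∑' n : ℕ,
      (((n : ℝ) + 2) - α - ((n : ℝ) + 1) * α * β) *
        (Real.Gamma μ / Real.Gamma (lam * ((n : ℝ) + 1) + μ)) * Real.exp (-1 / μ) /
        (Nat.factorial (n + 2) : ℝ) ≤ 1 - α := by
  rw [one_div] at hcond
  rw [neg_div, one_div]
  obtain ⟨hs, htsum⟩ := summable_and_tsum_gammaRatio_le hlam hμ
  have hterm (n : ℕ) := coeff_mul_div_factorial_nonneg_and_le (r := gammaRatio lam μ (n + 1))
    hα0 hα1 hβ1 (gammaRatio_nonneg (by linarith) (by linarith) (by positivity))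
    (exp_pos (-μ⁻¹)).le n
  have hbound := hs.mul_left ((1 - α * β) * exp (-μ⁻¹))
  have hsum := hbound.of_nonneg_of_le (fun n => (hterm n).1) (fun n => (hterm n).2)
  refine ⟨hsum, ?_⟩
  calc _ ≤ ∑' n : ℕ, (1 - α * β) * exp (-μ⁻¹) * (gammaRatio lam μ (n + 1) / (n + 1)!) :=
        hsum.tsum_le_tsum (fun n => (hterm n).2) hbound
    _ = (1 - α * β) * exp (-μ⁻¹) * ∑' n : ℕ, gammaRatio lam μ (n + 1) / (n + 1)! :=
        tsum_mul_left
    _ ≤ (1 - α * β) * exp (-μ⁻¹) * (exp μ⁻¹ - 1) := by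
        have hA : 0 ≤ 1 - α * β := by nlinarith
        gcongr
    _ ≤ 1 - α := mul_exp_neg_mul_exp_sub_one_le hcond

theorem stmt17 (lam μ α β : ℝ) (hlam : 1 ≤ lam) (hμ : 0.462 < μ)
    (hα0 : 0 ≤ α) (hα1 : α < 1) (hβ0 : 0 ≤ β) (hβ1 : β < 1)
    (hcond : (1 - β) * α * (Real.exp (1 / μ) - 1) ≤ 1 - α) :
    Summable (fun n : ℕ =>
      (((n : ℝ) + 2) - α - ((n : ℝ) + 1) * α * β) *
        (Real.Gamma μ / Real.Gamma (lam * ((n : ℝ) + 1) + μ)) * Real.exp (-1 / μ) /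
        (Nat.factorial (n + 2) : ℝ)) ∧
    ∑' n : ℕ,
      (((n : ℝ) + 2) - α - ((n : ℝ) + 1) * α * β) *
        (Real.Gamma μ / Real.Gamma (lam * ((n : ℝ) + 1) + μ)) * Real.exp (-1 / μ) /
        (Nat.factorial (n + 2) : ℝ) ≤ 1 - α :=
  stmt17_general lam μ α β hlam hμ hα0 hα1 hβ1 hcond
end
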